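/- arXiv:1803.11298 — 2 statements merged into one kernel-verified Lean document; each statement's English description precedes it below -/
import Mathlib

section
/- Let N ≥ 5 and -4 < τ. For radial u ∈ C_c²(B_R \ {0}) with u(x) = U(|x|), under the substitution U(r) = r^{-(N'-4)/2} w(t), t = -ln r (where N' = N + α, 4-N < α < N), one has ∫_{B_R} |x|^α (Δu)² dx = ω_N ∫_{-ln R}^∞ ( |w''|² + 2δ̃_α |w'|² + δ_α |w|² ) dt, where ω_N = |S^{N-1}|, δ̃_α = ((N-2)/2)² + ((α-2)/2)², and δ_α = [((N-2)/2)² - ((α-2)/2)²]². -/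
/-!
In the Emden–Fowler variable `t = -log r`, the substitution `U(r) = r^c w(t)` turns the radial
Laplacian into `r^(c-2) (w'' + a w' + b w)(t)` with constant coefficients, here `a = α - 2` and
`b = ((α-2)^2 - (N-2)^2)/4`. In polar coordinates the weight `r^(N-1) r^α (r^(c-2))^2` is
exactly `r⁻¹` for `c = -(N+α-4)/2`, and `dr/r = dt`, so the energy is
`ω_N ∫ (w'' + a w' + b w)^2 dt`.
Expanding the square, the cross terms integrate by parts to `-2b ∫ w'^2`, and
`a^2 - 2b = 2δ̃_α`, `b^2 = δ_α`.
-/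

open Set MeasureTheory Real

noncomputable def radialLaplacian (n : ℝ) (U : ℝ → ℝ) (r : ℝ) : ℝ :=
  deriv (deriv U) r + (n - 1) / r * deriv U r

theorem hasDerivAt_rpow_mul_comp_neg_log (c : ℝ) {v : ℝ → ℝ} {r : ℝ} (hr : 0 < r)
    (hv : DifferentiableAt ℝ v (-log r)) :
    HasDerivAt (fun s ↦ s ^ c * v (-log s))
      (r ^ (c - 1) * (c * v (-log r) - deriv v (-log r))) r := by
  have hpow := hasDerivAt_rpow_const (p := c) (Or.inl hr.ne')
  have hcomp : HasDerivAt (fun s ↦ v (-log s)) (deriv v (-log r) * -r⁻¹) r :=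
    hv.hasDerivAt.comp r (hasDerivAt_log hr.ne').neg
  refine (hpow.mul hcomp).congr_deriv ?_
  rw [rpow_sub_one hr.ne']
  field_simp
  ring

theorem deriv_eq_rpow_mul_comp_neg_log {U v : ℝ → ℝ} {c : ℝ} (hv : Differentiable ℝ v)
    (hU : ∀ r ∈ Ioi 0, U r = r ^ c * v (-log r)) :
    ∀ r ∈ Ioi 0, deriv U r = r ^ (c - 1) * (c * v (-log r) - deriv v (-log r)) := by
  intro r hr
  have hUr : U =ᶠ[nhds r] fun s ↦ s ^ c * v (-log s) :=
    Filter.eventually_of_mem (Ioi_mem_nhds hr) hU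
  rw [hUr.deriv_eq, (hasDerivAt_rpow_mul_comp_neg_log c hr (hv _)).deriv]

theorem radialLaplacian_eq_rpow_mul_comp_neg_log (n c : ℝ) {U v : ℝ → ℝ}
    (hv : ContDiff ℝ 2 v)
    (hU : ∀ r ∈ Ioi 0, U r = r ^ c * v (-log r)) {r : ℝ} (hr : 0 < r) :
    radialLaplacian n U r = r ^ (c - 2) * (deriv (deriv v) (-log r)
      - (2 * c + n - 2) * deriv v (-log r) + c * (c + n - 2) * v (-log r)) := by
  have hv1 : ContDiff ℝ 1 (deriv v) := hv.iterate_deriv' 1 1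
  have hvd : Differentiable ℝ v := hv.differentiable (by norm_num)
  have hv1d : Differentiable ℝ (deriv v) := hv1.differentiable one_ne_zero
  have hU' := deriv_eq_rpow_mul_comp_neg_log hvd hU
  have hU'' := deriv_eq_rpow_mul_comp_neg_log (v := fun t ↦ c * v t - deriv v t)
    ((hvd.const_mul c).sub hv1d) hU'
  have hderiv : ∀ t,
      deriv (fun t ↦ c * v t - deriv v t) t = c * deriv v t - deriv (deriv v) t :=
    fun t ↦ (((hvd t).hasDerivAt.const_mul c).sub (hv1d t).hasDerivAt).deriv
  have hpow : (n - 1) / r * r ^ (c - 1) = (n - 1) * r ^ (c - 2) := by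
    rw [show c - 2 = c - 1 - 1 by ring, rpow_sub_one hr.ne' (c - 1)]
    ring
  rw [radialLaplacian, hU'' r hr, hU' r hr, hderiv, show c - 1 - 1 = c - 2 by ring,
    ← mul_assoc, hpow]
  ring

theorem integral_Ioi_inv_smul_comp_neg_log {E : Type*} [NormedAddCommGroup E]
    [NormedSpace ℝ E] (f : ℝ → E) :
    ∫ r in Ioi (0 : ℝ), r⁻¹ • f (-log r) = ∫ t, f t := by
  have hsub := integral_image_eq_integral_abs_deriv_smul MeasurableSet.univ
    (fun t _ ↦ (hasDerivAt_exp t).hasDerivWithinAt) exp_injective.injOn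
    (fun r ↦ r⁻¹ • f (-log r))
  rw [image_univ, range_exp, Measure.restrict_univ] at hsub
  rw [hsub, ← integral_neg_eq_self]
  congr 1 with t
  rw [log_exp, neg_neg, abs_of_pos (exp_pos _), smul_smul, mul_inv_cancel₀ (exp_pos _).ne',
    one_smul]

theorem derivs_eq_zero_of_notMem_tsupport {w : ℝ → ℝ} {t : ℝ} (ht : t ∉ tsupport w) :
    w t = 0 ∧ deriv w t = 0 ∧ deriv (deriv w) t = 0 :=
  ⟨image_eq_zero_of_notMem_tsupport ht,
    image_eq_zero_of_notMem_tsupport fun h ↦ ht (tsupport_deriv_subset h),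
    image_eq_zero_of_notMem_tsupport fun h ↦
      ht (tsupport_deriv_subset (tsupport_deriv_subset h))⟩

theorem integral_sq_deriv_deriv_add_mul_deriv_add_mul (a b : ℝ) {w : ℝ → ℝ}
    (hw : ContDiff ℝ 2 w) (hwcs : HasCompactSupport w) :
    ∫ t, (deriv (deriv w) t + a * deriv w t + b * w t) ^ 2 =
      ∫ t, (deriv (deriv w) t ^ 2 + (a ^ 2 - 2 * b) * deriv w t ^ 2 + b ^ 2 * w t ^ 2) := by
  have hw1 : ContDiff ℝ 1 (deriv w) := hw.iterate_deriv' 1 1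
  have hwd : Differentiable ℝ w := hw.differentiable (by norm_num)
  have hw1d : Differentiable ℝ (deriv w) := hw1.differentiable one_ne_zero
  have hw2c : Continuous (deriv (deriv w)) := hw1.continuous_deriv le_rfl
  have hintegrable : ∀ F : ℝ → ℝ, Continuous F →
      (∀ t, w t = 0 → deriv w t = 0 → deriv (deriv w) t = 0 → F t = 0) → Integrable F :=
    fun F hF hzero ↦ hF.integrable_of_hasCompactSupport <| hwcs.mono' fun t ht ↦ by
      by_contra h
      obtain ⟨h0, h1, h2⟩ := derivs_eq_zero_of_notMem_tsupport h
      exact ht (hzero t h0 h1 h2)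
  -- the cross terms of the square are `φ' - 2b w'^2`
  set φ : ℝ → ℝ := fun t ↦ a * deriv w t ^ 2 + a * b * w t ^ 2 + 2 * b * (w t * deriv w t)
  set φ' : ℝ → ℝ := fun t ↦
    2 * a * deriv w t * deriv (deriv w) t + 2 * a * b * w t * deriv w t
      + 2 * b * (deriv w t ^ 2 + w t * deriv (deriv w) t)
  have hφ : ∀ t, HasDerivAt φ (φ' t) t := fun t ↦ by
    have h0 := (hwd t).hasDerivAt
    have h1 := (hw1d t).hasDerivAt
    refine ((((h1.pow 2).const_mul a).add ((h0.pow 2).const_mul (a * b))).add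
      ((h0.mul h1).const_mul (2 * b))).congr_deriv ?_
    simp only [φ']
    norm_num
    ring
  have hφ'_zero : ∫ t, φ' t = 0 :=
    integral_eq_zero_of_hasDerivAt_of_integrable hφ
      (hintegrable φ' (by fun_prop) fun t h0 h1 h2 ↦ by simp [φ', h0, h1, h2])
      (hintegrable φ (by fun_prop) fun t h0 h1 h2 ↦ by simp [φ, h0, h1])
  rw [← add_zero (∫ t, _ + _ + _), ← hφ'_zero, ← integral_add]
  · congr 1 with t
    simp only [φ']
    ring
  · exact hintegrable _ (by fun_prop) fun t h0 h1 h2 ↦ by simp [h0, h1, h2]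
  · exact hintegrable φ' (by fun_prop) fun t h0 h1 h2 ↦ by simp [φ', h0, h1, h2]

noncomputable def emdenFowlerLaplacian (n α : ℝ) (w : ℝ → ℝ) (t : ℝ) : ℝ :=
  deriv (deriv w) t + (α - 2) * deriv w t + ((α - 2) ^ 2 - (n - 2) ^ 2) / 4 * w t

section EmdenFowler

variable {n α : ℝ} {U w : ℝ → ℝ}

theorem emdenFowlerLaplacian_eq_zero_of_notMem_tsupport {t : ℝ} (ht : t ∉ tsupport w) :
    emdenFowlerLaplacian n α w t = 0 := by
  obtain ⟨h0, h1, h2⟩ := derivs_eq_zero_of_notMem_tsupport ht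
  simp [emdenFowlerLaplacian, h0, h1, h2]

theorem radialLaplacian_eq_rpow_mul_emdenFowlerLaplacian (hw : ContDiff ℝ 2 w)
    (hU : ∀ r ∈ Ioi 0, U r = r ^ (-((n + α - 4) / 2)) * w (-log r)) {r : ℝ} (hr : 0 < r) :
    radialLaplacian n U r =
      r ^ (-((n + α - 4) / 2) - 2) * emdenFowlerLaplacian n α w (-log r) := by
  rw [radialLaplacian_eq_rpow_mul_comp_neg_log n _ hw hU hr, emdenFowlerLaplacian]
  congr 1
  ring

theorem pow_smul_rpow_mul_radialLaplacian_sq {N : ℕ} (hN : 1 ≤ N) (hw : ContDiff ℝ 2 w)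
    (hU : ∀ r ∈ Ioi 0, U r = r ^ (-((N + α - 4) / 2)) * w (-log r)) {r : ℝ} (hr : 0 < r) :
    r ^ (N - 1) • (r ^ α * radialLaplacian N U r ^ 2) =
      r⁻¹ • emdenFowlerLaplacian N α w (-log r) ^ 2 := by
  have hpow : r ^ (N - 1) * r ^ α * (r ^ (-((N + α - 4) / 2) - 2)) ^ 2 = r⁻¹ := by
    rw [← rpow_natCast, ← rpow_natCast, ← rpow_mul hr.le, ← rpow_add hr, ← rpow_add hr,
      ← rpow_neg_one]
    congr 1
    push_cast [Nat.cast_sub hN]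
    ring
  rw [smul_eq_mul, smul_eq_mul, radialLaplacian_eq_rpow_mul_emdenFowlerLaplacian hw hU hr,
    ← hpow]
  ring

end EmdenFowler

theorem stmt_15_general (N : ℕ) (hN : 5 ≤ N) (α R : ℝ)
    (hR : 0 < R)
    (w : ℝ → ℝ) (hw : ContDiff ℝ 2 w) (hwcs : HasCompactSupport w)
    (hwsupp : tsupport w ⊆ Ioi (-Real.log R))
    (U : ℝ → ℝ)
    (hU : ∀ r ∈ Ioi (0:ℝ), U r = r ^ (-(((N : ℝ) + α - 4) / 2)) * w (-Real.log r)) :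
    (∫ x in Metric.ball (0 : EuclideanSpace ℝ (Fin N)) R,
        ‖x‖ ^ α * (deriv (deriv U) ‖x‖ + ((N : ℝ) - 1) / ‖x‖ * deriv U ‖x‖) ^ 2) =
      ((N : ℝ) * (volume (Metric.ball (0 : EuclideanSpace ℝ (Fin N)) 1)).toReal) *
        ∫ t in Ioi (-Real.log R),
          (deriv (deriv w) t) ^ 2 +
            2 * ((((N : ℝ) - 2) / 2) ^ 2 + ((α - 2) / 2) ^ 2) * (deriv w t) ^ 2 +
            ((((N : ℝ) - 2) / 2) ^ 2 - ((α - 2) / 2) ^ 2) ^ 2 * (w t) ^ 2 := by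
  have hvanish : ∀ t ∉ Ioi (-log R), t ∉ tsupport w := fun t ht h ↦ ht (hwsupp h)
  have hball : ∀ x ∉ Metric.ball (0 : EuclideanSpace ℝ (Fin N)) R,
      ‖x‖ ^ α * radialLaplacian N U ‖x‖ ^ 2 = 0 := fun x hx ↦ by
    have hRx : R ≤ ‖x‖ := by simpa using hx
    have ht : -log ‖x‖ ∉ Ioi (-log R) := by simpa using log_le_log hR hRx
    simp [radialLaplacian_eq_rpow_mul_emdenFowlerLaplacian hw hU (hR.trans_le hRx),
      emdenFowlerLaplacian_eq_zero_of_notMem_tsupport (hvanish _ ht)]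
  have : Nontrivial (EuclideanSpace ℝ (Fin N)) := by
    have : Nonempty (Fin N) := ⟨⟨0, by omega⟩⟩
    infer_instance
  set ω : ℝ := (N : ℝ) * (volume (Metric.ball (0 : EuclideanSpace ℝ (Fin N)) 1)).toReal
  calc (∫ x in Metric.ball (0 : EuclideanSpace ℝ (Fin N)) R,
          ‖x‖ ^ α * radialLaplacian N U ‖x‖ ^ 2)
      = ω * ∫ t, emdenFowlerLaplacian N α w t ^ 2 := by
        rw [setIntegral_eq_integral_of_forall_compl_eq_zero hball,
          integral_fun_norm_addHaar volume (fun r ↦ r ^ α * radialLaplacian N U r ^ 2),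
          finrank_euclideanSpace_fin, setIntegral_congr_fun measurableSet_Ioi fun r hr ↦
            pow_smul_rpow_mul_radialLaplacian_sq (by omega) hw hU hr,
          integral_Ioi_inv_smul_comp_neg_log (fun t ↦ emdenFowlerLaplacian N α w t ^ 2),
          nsmul_eq_mul, smul_eq_mul, Measure.real, mul_assoc]
    _ = ω * ∫ t, (deriv (deriv w) t ^ 2 +
          2 * ((((N : ℝ) - 2) / 2) ^ 2 + ((α - 2) / 2) ^ 2) * deriv w t ^ 2 +
          ((((N : ℝ) - 2) / 2) ^ 2 - ((α - 2) / 2) ^ 2) ^ 2 * w t ^ 2) := by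
        simp only [emdenFowlerLaplacian]
        rw [integral_sq_deriv_deriv_add_mul_deriv_add_mul _ _ hw hwcs]
        congr 2 with t
        ring
    _ = _ := by
        rw [setIntegral_eq_integral_of_forall_compl_eq_zero fun t ht ↦ by
          obtain ⟨h0, h1, h2⟩ := derivs_eq_zero_of_notMem_tsupport (hvanish t ht)
          simp [h0, h1, h2]]

theorem stmt_15 (N : ℕ) (hN : 5 ≤ N) (α R : ℝ)
    (hα1 : 4 - (N : ℝ) < α) (hα2 : α < N) (hR : 0 < R)
    (w : ℝ → ℝ) (hw : ContDiff ℝ 2 w) (hwcs : HasCompactSupport w)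
    (hwsupp : tsupport w ⊆ Ioi (-Real.log R))
    (U : ℝ → ℝ)
    (hU : ∀ r ∈ Ioi (0:ℝ), U r = r ^ (-(((N : ℝ) + α - 4) / 2)) * w (-Real.log r)) :
    (∫ x in Metric.ball (0 : EuclideanSpace ℝ (Fin N)) R,
        ‖x‖ ^ α * (deriv (deriv U) ‖x‖ + ((N : ℝ) - 1) / ‖x‖ * deriv U ‖x‖) ^ 2) =
      ((N : ℝ) * (volume (Metric.ball (0 : EuclideanSpace ℝ (Fin N)) 1)).toReal) *
        ∫ t in Ioi (-Real.log R),
          (deriv (deriv w) t) ^ 2 +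
            2 * ((((N : ℝ) - 2) / 2) ^ 2 + ((α - 2) / 2) ^ 2) * (deriv w t) ^ 2 +
            ((((N : ℝ) - 2) / 2) ^ 2 - ((α - 2) / 2) ^ 2) ^ 2 * (w t) ^ 2 :=
  stmt_15_general N hN α R hR w hw hwcs hwsupp U hU
end

section
/- Let p > 1, 1 < ϱ < p, D > 0. Then for a ≥ 2 sufficiently large and K > 0 sufficiently large, the pair h(s) = K(1-s²)^a, k(s) = K^ϱ (1-s²)^a is a subsolution on (-1,1): for every δ ∈ (0,1] and every s ∈ (-1,1), h''(s) + (N-1)/(s + 3/δ)·h'(s) + D·k(s) ≥ 0 and k''(s) + (N-1)/(s + 3/δ)·k'(s) + D·h(s)^p ≥ 0, with h(±1) = k(±1) = 0. -/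
open Set

lemma aux_d1 (C : ℝ) :
    deriv (fun s : ℝ => C * (1 - s ^ 2) ^ (2:ℝ)) = fun s => C * (4*s^3 - 4*s) := by
  have hf : (fun s : ℝ => C * (1 - s ^ 2) ^ (2:ℝ)) = fun s => C*s^4 - 2*C*s^2 + C := by
    funext s; rw [Real.rpow_two]; ring
  rw [hf]
  funext s
  have h4 : HasDerivAt (fun s : ℝ => s^4) (4*s^3) s := by
    simpa using hasDerivAt_pow 4 s
  have h2 : HasDerivAt (fun s : ℝ => s^2) (2*s) s := by
    simpa using hasDerivAt_pow 2 s
  have h : HasDerivAt (fun s : ℝ => C*s^4 - 2*C*s^2 + C)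
      (C*(4*s^3) - 2*C*(2*s)) s :=
    ((h4.const_mul C).sub (h2.const_mul (2*C))).add_const C
  rw [h.deriv]; ring

lemma aux_d1' (C : ℝ) :
    deriv (fun s : ℝ => C * (4*s^3 - 4*s)) = fun s => C * (12*s^2 - 4) := by
  funext s
  have h3 : HasDerivAt (fun s : ℝ => s^3) (3*s^2) s := by
    simpa using hasDerivAt_pow 3 s
  have h : HasDerivAt (fun s : ℝ => C * (4*s^3 - 4*s))
      (C * (4*(3*s^2) - 4*1)) s := by exact
    (((h3.const_mul 4).sub ((hasDerivAt_id s).const_mul 4)).const_mul C)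
  rw [h.deriv]; ring

lemma pow_helper (M e K : ℝ) (hM : 0 < M) (he : 0 < e) (hK : M ^ (1/e) ≤ K) : M ≤ K ^ e := by
  calc M = (M ^ (1/e)) ^ e := by
        rw [← Real.rpow_mul hM.le, one_div, inv_mul_cancel₀ he.ne', Real.rpow_one]
    _ ≤ K ^ e := Real.rpow_le_rpow (Real.rpow_nonneg hM.le _) hK he.le

lemma key1 (n D Q u : ℝ) (hn : 2 ≤ n) (hDQ : 2*(n+5)^3 ≤ D*Q) (hu0 : 0 < u)
    (hDQ0 : 0 ≤ D*Q) :
    0 ≤ 8 - (2*n+10)*u + (D*Q)*u^2 := by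
  have hn5 : (0:ℝ) < n + 5 := by linarith
  rcases le_or_gt u (1/(n+5)) with h | h
  · have h1 : (n+5)*u ≤ 1 := by
      calc (n+5)*u ≤ (n+5)*(1/(n+5)) := mul_le_mul_of_nonneg_left h hn5.le
        _ = 1 := by field_simp
    nlinarith [mul_nonneg hDQ0 (sq_nonneg u)]
  · have h1 : 1 ≤ (n+5)*u := by
      calc (1:ℝ) = (n+5)*(1/(n+5)) := by field_simp
        _ ≤ (n+5)*u := mul_le_mul_of_nonneg_left h.le hn5.le
    nlinarith [mul_le_mul_of_nonneg_right hDQ (sq_nonneg u), sq_nonneg ((n+5)*u - 1),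
      mul_pos hu0 hn5]

lemma key2 (n D R W v u : ℝ) (hn : 2 ≤ n) (hDR : 2*(n+5) ≤ D*R*W) (hu1 : u ≤ 1)
    (hDR0 : 0 ≤ D*R) (hv0 : 0 ≤ v) (hvW : 1/(n+5) ≤ u → W ≤ v) :
    0 ≤ 8 - (2*n+10)*u + (D*R)*v := by
  have hn5 : (0:ℝ) < n + 5 := by linarith
  rcases le_or_gt u (1/(n+5)) with h | h
  · have h1 : (n+5)*u ≤ 1 := by
      calc (n+5)*u ≤ (n+5)*(1/(n+5)) := mul_le_mul_of_nonneg_left h hn5.le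
        _ = 1 := by field_simp
    nlinarith [mul_nonneg hDR0 hv0]
  · have hW := hvW h.le
    have h2 : 2*(n+5) ≤ D*R*v := le_trans hDR (by nlinarith)
    nlinarith

set_option maxHeartbeats 1600000 in
theorem stmt_19 (N : ℕ) (hN : 2 ≤ N) (p ϱ D : ℝ)
    (hp : 1 < p) (hϱ1 : 1 < ϱ) (hϱ2 : ϱ < p) (hD : 0 < D) :
    ∃ a K : ℝ, 2 ≤ a ∧ 1 ≤ K ∧
      (∀ δ ∈ Ioc (0:ℝ) 1, ∀ s ∈ Ioo (-1:ℝ) 1,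
        0 ≤ deriv (deriv (fun s : ℝ => K * (1 - s ^ 2) ^ a)) s +
            ((N : ℝ) - 1) / (s + 3 / δ) *
              deriv (fun s : ℝ => K * (1 - s ^ 2) ^ a) s +
            D * (K ^ ϱ * (1 - s ^ 2) ^ a) ∧
        0 ≤ deriv (deriv (fun s : ℝ => K ^ ϱ * (1 - s ^ 2) ^ a)) s +
            ((N : ℝ) - 1) / (s + 3 / δ) *
              deriv (fun s : ℝ => K ^ ϱ * (1 - s ^ 2) ^ a) s +
            D * (K * (1 - s ^ 2) ^ a) ^ p) ∧
      K * (1 - ((-1:ℝ)) ^ 2) ^ a = 0 ∧ K * (1 - (1:ℝ) ^ 2) ^ a = 0 ∧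
      K ^ ϱ * (1 - ((-1:ℝ)) ^ 2) ^ a = 0 ∧ K ^ ϱ * (1 - (1:ℝ) ^ 2) ^ a = 0 := by
  have hn : (2:ℝ) ≤ (N:ℝ) := by exact_mod_cast hN
  obtain ⟨n, hn_def⟩ : ∃ n : ℝ, n = (N:ℝ) := ⟨_, rfl⟩
  rw [← hn_def] at hn
  have hn5 : (0:ℝ) < n + 5 := by linarith
  obtain ⟨w, hw_def⟩ : ∃ w : ℝ, w = (((1:ℝ)/(n+5))^2) ^ p := ⟨_, rfl⟩
  have hw : 0 < w := hw_def ▸ Real.rpow_pos_of_pos (by positivity) p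
  obtain ⟨M1, hM1_def⟩ : ∃ x : ℝ, x = 2*(n+5)^3/D := ⟨_, rfl⟩
  obtain ⟨M2, hM2_def⟩ : ∃ x : ℝ, x = 2*(n+5)/(D*w) := ⟨_, rfl⟩
  have hM1 : 0 < M1 := by rw [hM1_def]; positivity
  have hM2 : 0 < M2 := by rw [hM2_def]; positivity
  obtain ⟨K, hK_def⟩ : ∃ x : ℝ, x = max 1 (max (M1 ^ (1/(ϱ-1))) (M2 ^ (1/(p-ϱ)))) := ⟨_, rfl⟩
  have hK1 : (1:ℝ) ≤ K := hK_def ▸ le_max_left _ _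
  have hK0 : (0:ℝ) < K := lt_of_lt_of_le one_pos hK1
  have hQ : M1 ≤ K ^ (ϱ-1) :=
    pow_helper _ _ _ hM1 (by linarith)
      (hK_def ▸ le_trans (le_trans (le_max_left _ _) (le_max_right _ _)) le_rfl)
  have hR : M2 ≤ K ^ (p-ϱ) :=
    pow_helper _ _ _ hM2 (by linarith)
      (hK_def ▸ le_trans (le_trans (le_max_right _ _) (le_max_right _ _)) le_rfl)
  obtain ⟨Q, hQ_def⟩ : ∃ x : ℝ, x = K ^ (ϱ-1) := ⟨_, rfl⟩
  obtain ⟨R, hR_def⟩ : ∃ x : ℝ, x = K ^ (p-ϱ) := ⟨_, rfl⟩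
  rw [← hQ_def] at hQ
  rw [← hR_def] at hR
  have hQ0 : 0 < Q := hQ_def ▸ Real.rpow_pos_of_pos hK0 _
  have hR0 : 0 < R := hR_def ▸ Real.rpow_pos_of_pos hK0 _
  have hDQ : 2*(n+5)^3 ≤ D*Q := by
    rw [hM1_def, div_le_iff₀ hD] at hQ; linarith
  have hDR : 2*(n+5) ≤ D*R*w := by
    rw [hM2_def, div_le_iff₀ (by positivity : 0 < D*w)] at hR; nlinarith
  have hKϱ : K ^ ϱ = K * Q := by
    rw [hQ_def]
    nth_rewrite 2 [← Real.rpow_one K]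
    rw [← Real.rpow_add hK0]; congr 1; ring
  have hKp : K ^ p = K ^ ϱ * R := by
    rw [hR_def, ← Real.rpow_add hK0]; congr 1; ring
  have hKϱ0 : 0 < K ^ ϱ := Real.rpow_pos_of_pos hK0 _
  refine ⟨2, K, le_refl 2, hK1, ?_, ?_, ?_, ?_, ?_⟩
  · intro δ hδ s hs
    obtain ⟨hδ0, hδ1⟩ := hδ
    obtain ⟨hs1, hs2'⟩ := hs
    simp only [aux_d1, aux_d1', ← hn_def]
    obtain ⟨u, hu_def⟩ : ∃ x : ℝ, x = 1 - s^2 := ⟨_, rfl⟩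
    rw [← hu_def]
    have hu0 : 0 < u := by rw [hu_def]; nlinarith
    have hu1 : u ≤ 1 := by rw [hu_def]; nlinarith [sq_nonneg s]
    have h3δ : (3:ℝ) ≤ 3/δ := by
      rw [le_div_iff₀ hδ0]; nlinarith
    have hd0 : (0:ℝ) < s + 3/δ := by linarith
    obtain ⟨c, hc_def⟩ : ∃ x : ℝ, x = (n-1)/(s + 3/δ) := ⟨_, rfl⟩
    rw [← hc_def]
    have hcs : c*s ≤ (n-1)/2 := by
      rw [hc_def, div_mul_eq_mul_div, div_le_div_iff₀ hd0 two_pos]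
      nlinarith [mul_nonneg (show (0:ℝ) ≤ n-1 by linarith) (show (0:ℝ) ≤ 3/δ - s by linarith)]
    have hs2 : s^2 = 1 - u := by rw [hu_def]; ring
    simp only [Real.rpow_two, hKϱ, hKp]
    constructor
    · -- first inequality
      have hterm : -(4*K*u)*((n-1)/2) ≤ c*(K*(4*s^3-4*s)) := by
        have e1 : c*(K*(4*s^3-4*s)) = -(4*K*u)*(c*s) := by rw [hu_def]; ring
        rw [e1]
        have h4 : (0:ℝ) ≤ 4*K*u := by positivity
        linarith [mul_le_mul_of_nonneg_left hcs h4]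
      have hkey := key1 n D Q u hn hDQ hu0 (by positivity)
      have hKkey := mul_nonneg hK0.le hkey
      have e2 : K*(12*s^2-4) = 8*K - 12*(K*u) := by rw [hs2]; ring
      linarith [hterm, hKkey, e2]
    · -- second inequality
      have hmul : (K * u^2) ^ p = (K*Q) * R * (u^2:ℝ)^p := by
        rw [Real.mul_rpow hK0.le (by positivity), hKp, hKϱ]
      obtain ⟨v, hv_def⟩ : ∃ x : ℝ, x = ((u^2 : ℝ)) ^ p := ⟨_, rfl⟩
      rw [← hv_def] at hmul
      have hv0 : 0 ≤ v := hv_def ▸ Real.rpow_nonneg (by positivity) p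
      have hvW : 1/(n+5) ≤ u → w ≤ v := by
        intro h
        rw [hw_def, hv_def]
        exact Real.rpow_le_rpow (by positivity) (pow_le_pow_left₀ (by positivity) h 2) (by linarith)
      have hkey := key2 n D R w v u hn hDR hu1 (by positivity) hv0 hvW
      have hPkey := mul_nonneg (mul_nonneg hK0.le hQ0.le) hkey
      have hterm : -(4*(K*Q)*u)*((n-1)/2) ≤ c*((K*Q)*(4*s^3-4*s)) := by
        have e1 : c*((K*Q)*(4*s^3-4*s)) = -(4*(K*Q)*u)*(c*s) := by rw [hu_def]; ring
        rw [e1]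
        have h4 : (0:ℝ) ≤ 4*(K*Q)*u := by positivity
        linarith [mul_le_mul_of_nonneg_left hcs h4]
      have e2 : (K*Q)*(12*s^2-4) = 8*(K*Q) - 12*((K*Q)*u) := by rw [hs2]; ring
      rw [hmul] at *
      linarith [hterm, hPkey, e2]
  · norm_num [Real.zero_rpow]
  · norm_num [Real.zero_rpow]
  · norm_num [Real.zero_rpow]
  · norm_num [Real.zero_rpow]
end
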